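/- Let M* be a maximum cardinality matching and M a matching in a finite simple graph G, and let k ≥ 1. If every M-augmenting path in G has length at least 2k + 1, then |M| ≥ (k/(k+1)) · |M*|. -/

import Mathlib

/-- The set of vertices covered by a set `M` of edges. -/
def coveredVerts {V : Type*} (M : Set (Sym2 V)) : Set V := {x : V | ∃ e ∈ M, x ∈ e}

/-- `M` is a matching in `G`: a set of edges of `G` that are pairwise non-adjacent. -/
def IsMatchingSet {V : Type*} (G : SimpleGraph V) (M : Set (Sym2 V)) : Prop :=
  M ⊆ G.edgeSet ∧ ∀ e ∈ M, ∀ f ∈ M, e ≠ f → ∀ x : V, x ∈ e → x ∉ f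

/-- `p` is an `M`-augmenting path: a simple path with at least one edge, both of whose
endpoints are `M`-free, and whose edges alternate between `E ∖ M` and `M` (the edge at
position `i` belongs to `M` iff `i` is odd). -/
def IsAugPath {V : Type*} (G : SimpleGraph V) (M : Set (Sym2 V)) {u v : V}
    (p : G.Walk u v) : Prop :=
  p.IsPath ∧ 0 < p.length ∧ u ∉ coveredVerts M ∧ v ∉ coveredVerts M ∧
    ∀ (i : ℕ) (h : i < p.edges.length), (p.edges.get ⟨i, h⟩ ∈ M ↔ Odd i)

/-- An `M`-augmenting path in `G`, bundled with its endpoints. -/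
structure AugPath {V : Type*} (G : SimpleGraph V) (M : Set (Sym2 V)) where
  src : V
  tgt : V
  walk : G.Walk src tgt
  isAug : IsAugPath G M walk

/-!
In `M ∆ M*` every vertex has degree at most two, so it splits into alternating paths and cycles.
A component with more edges of `M*` than of `M` is an `M`-augmenting path, hence carries `j ≥ k`
edges of `M` and `j + 1` of `M*`; every other component carries at least as many edges of `M` as
of `M*`. Summing gives `k |M*| ≤ (k + 1) |M|`.

Rather than decomposing into components, we peel them off one at a time: while what is left of
`M*` is larger than what is left of `M`, some vertex is covered by the former but not by the
latter, and a maximal alternating path starting there is such a component.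
-/

open SimpleGraph

section

variable {V : Type*} {G : SimpleGraph V}

theorem coveredVerts_mono {A B : Set (Sym2 V)} (h : A ⊆ B) : coveredVerts A ⊆ coveredVerts B :=
  fun _ ⟨e, he, hx⟩ => ⟨e, h he, hx⟩

namespace IsMatchingSet

variable {M A B : Set (Sym2 V)}

theorem mono (hM : IsMatchingSet G M) (hA : A ⊆ M) : IsMatchingSet G A :=
  ⟨hA.trans hM.1, fun e he f hf => hM.2 e (hA he) f (hA hf)⟩

theorem eq_of_mem_of_mem (hM : IsMatchingSet G M) {e f : Sym2 V} (he : e ∈ M) (hf : f ∈ M)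
    {x : V} (hxe : x ∈ e) (hxf : x ∈ f) : e = f :=
  by_contra fun hne => hM.2 e he f hf hne x hxe hxf

theorem adj (hM : IsMatchingSet G M) {x y : V} (h : s(x, y) ∈ M) : G.Adj x y :=
  hM.1 h

theorem ncard_coveredVerts [Finite V] (hM : IsMatchingSet G M) :
    (coveredVerts M).ncard = 2 * M.ncard := by
  induction M, M.toFinite using Set.Finite.induction_on with
  | empty => simp [coveredVerts]
  | @insert e M heM hMfin ih =>
    have hdisj : Disjoint {x | x ∈ e} (coveredVerts M) :=
      Set.disjoint_left.2 fun x hxe ⟨f, hfM, hxf⟩ => hM.2 e (.inl rfl) f (.inr hfM)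
        (fun h => heM (h ▸ hfM)) x hxe hxf
    have hcov : coveredVerts (insert e M) = {x | x ∈ e} ∪ coveredVerts M := by
      ext x; simp [coveredVerts]
    have he : ({x | x ∈ e} : Set V).ncard = 2 := by
      induction e with
      | _ a b =>
        have hab : a ≠ b := (hM.adj (Set.mem_insert _ _)).ne
        have : {x | x ∈ s(a, b)} = ({a, b} : Set V) := by ext; simp
        rw [this, Set.ncard_pair hab]
    rw [hcov, Set.ncard_union_eq hdisj, he, ih (hM.mono (Set.subset_insert _ _)),
      Set.ncard_insert_of_notMem heM hMfin]
    ring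

theorem exists_mem_coveredVerts_notMem [Finite V] (hA : IsMatchingSet G A)
    (hB : IsMatchingSet G B) (h : A.ncard < B.ncard) :
    ∃ x ∈ coveredVerts B, x ∉ coveredVerts A := by
  by_contra! hsub
  have := Set.ncard_le_ncard (s := coveredVerts B) hsub
  rw [hA.ncard_coveredVerts, hB.ncard_coveredVerts] at this
  omega

end IsMatchingSet

theorem List.ncard_inter_of_getElem_mem_iff_even {α : Type*} {l : List α} (hl : l.Nodup)
    {S T : Set α} (hS : ∀ i (h : i < l.length), l[i] ∈ S ↔ Even i)
    (hT : ∀ i (h : i < l.length), l[i] ∈ T ↔ Odd i) :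
    (S ∩ {x | x ∈ l}).ncard = (l.length + 1) / 2 ∧ (T ∩ {x | x ∈ l}).ncard = l.length / 2 := by
  induction l generalizing S T with
  | nil => simp
  | cons a l ih =>
    obtain ⟨hTl, hSl⟩ := ih (S := T) (T := S) (List.nodup_cons.1 hl).2
      (fun i h => by simpa [Nat.odd_add_one] using hT (i + 1) (Nat.succ_lt_succ h))
      (fun i h => by simpa [Nat.even_add_one] using hS (i + 1) (Nat.succ_lt_succ h))
    have haS : a ∈ S := (hS 0 (by simp)).2 (by decide)
    have haT : a ∉ T := fun h => Nat.not_odd_zero ((hT 0 (by simp)).1 h)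
    have hSa : S ∩ {x | x ∈ a :: l} = insert a (S ∩ {x | x ∈ l}) := by
      ext x; by_cases hx : x = a <;> simp [hx, haS]
    have hTa : T ∩ {x | x ∈ a :: l} = T ∩ {x | x ∈ l} := by
      ext x; by_cases hx : x = a <;> simp [hx, haT]
    rw [hSa, hTa, Set.ncard_insert_of_notMem (fun h => (List.nodup_cons.1 hl).1 h.2)
      ((List.finite_toSet l).inter_of_right S), hSl, hTl]
    simp only [List.length_cons, and_true]
    omega

namespace SimpleGraph.Walk

variable {u v w : V}

theorem getVert_concat_of_le (p : G.Walk u v) (h : G.Adj v w) {i : ℕ} (hi : i ≤ p.length) :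
    (p.concat h).getVert i = p.getVert i := by
  rw [concat_eq_append, getVert_append']
  simp [hi]

theorem exists_even_add_getVert_mem (p : G.Walk u v) {j n : ℕ} (hj : j ≤ p.length)
    (hlt : Even (j + n) → j < p.length) (hpos : Odd (j + n) → 0 < j) :
    ∃ i < p.length, Even (i + n) ∧ p.getVert j ∈ s(p.getVert i, p.getVert (i + 1)) := by
  rcases Nat.even_or_odd (j + n) with h | h
  · exact ⟨j, hlt h, h, Sym2.mem_mk_left _ _⟩
  · have hj0 := hpos h
    refine ⟨j - 1, by omega, ?_, ?_⟩
    · rw [Nat.odd_iff] at h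
      rw [Nat.even_iff]
      omega
    · rw [Nat.sub_add_cancel hj0]
      exact Sym2.mem_mk_right _ _

def IsAltPath (P Q : Set (Sym2 V)) (p : G.Walk u v) : Prop :=
  p.IsPath ∧ ∀ i < p.length, s(p.getVert i, p.getVert (i + 1)) ∈ if Even i then P else Q

variable {P Q : Set (Sym2 V)}

theorem IsAltPath.concat {p : G.Walk u v} (hp : p.IsAltPath P Q) (hw : w ∉ p.support)
    (h : G.Adj v w) (hvw : s(v, w) ∈ if Even p.length then P else Q) :
    (p.concat h).IsAltPath P Q := by
  refine ⟨hp.1.concat hw h, fun i hi => ?_⟩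
  rw [length_concat] at hi
  rcases Nat.lt_succ_iff_lt_or_eq.1 hi with hi | rfl
  · rw [getVert_concat_of_le p h hi.le, getVert_concat_of_le p h hi]
    exact hp.2 i hi
  · rw [getVert_concat_of_le p h le_rfl, getVert_length, ← length_concat p h, getVert_length]
    exact hvw

theorem exists_maximal_isAltPath [Fintype V] (P Q : Set (Sym2 V)) (x : V) :
    ∃ z, ∃ p : G.Walk x z, p.IsAltPath P Q ∧ ∀ w (h : G.Adj z w), ¬ (p.concat h).IsAltPath P Q := by
  by_contra! hext
  have hlong : ∀ n, ∃ z, ∃ p : G.Walk x z, p.IsAltPath P Q ∧ p.length = n := by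
    intro n
    induction n with
    | zero => exact ⟨x, nil, ⟨.nil, by simp⟩, rfl⟩
    | succ n ih =>
      obtain ⟨z, p, hp, rfl⟩ := ih
      obtain ⟨w, h, hpw⟩ := hext z p hp
      exact ⟨w, p.concat h, hpw, length_concat p h⟩
  obtain ⟨z, p, hp, hlen⟩ := hlong (Fintype.card V)
  exact hp.1.length_lt.ne hlen

theorem IsAltPath.getElem_edges_mem {p : G.Walk u v} (hp : p.IsAltPath P Q) {i : ℕ}
    (hi : i < p.edges.length) : p.edges[i] ∈ if Even i then P else Q := by
  rw [getElem_edges]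
  exact hp.2 i (by simpa using hi)

theorem IsAltPath.isAugPath {M : Set (Sym2 V)} {p : G.Walk u v} (hp : p.IsAltPath P Q)
    (hPM : Disjoint P M) (hQM : Q ⊆ M) (hpos : 0 < p.length) (hu : u ∉ coveredVerts M)
    (hv : v ∉ coveredVerts M) : IsAugPath G M p := by
  refine ⟨hp.1, hpos, hu, hv, fun i hi => ?_⟩
  have hmem := hp.getElem_edges_mem hi
  rw [List.get_eq_getElem, ← Nat.not_even_iff_odd]
  by_cases hev : Even i
  · rw [if_pos hev] at hmem
    exact iff_of_false (fun hM => hPM.ne_of_mem hmem hM rfl) (not_not_intro hev)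
  · rw [if_neg hev] at hmem
    exact iff_of_true (hQM hmem) hev

theorem IsAltPath.notMem_coveredVerts_of_maximal {x z : V} {p : G.Walk x z}
    (hP : IsMatchingSet G P) (hQ : IsMatchingSet G Q) (hp : p.IsAltPath P Q)
    (hx : x ∉ coveredVerts Q) (hmax : ∀ w (h : G.Adj z w), ¬ (p.concat h).IsAltPath P Q) :
    z ∉ coveredVerts (if Even p.length then P else Q) := by
  -- The other end `w` of an `R`-edge at `z` lies on the path (else the path extends), where it
  -- already has an `R`-edge of the path; that edge would have to contain `z`, against parity.
  set R := if Even p.length then P else Q with hR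
  have hRm : IsMatchingSet G R := by rw [hR]; split_ifs <;> assumption
  rintro ⟨f, hfR, hzf⟩
  obtain ⟨w, rfl⟩ : ∃ w, s(z, w) = f := ⟨_, Sym2.other_spec hzf⟩
  have hzw : G.Adj z w := hRm.adj hfR
  have hws : w ∈ p.support := by_contra fun hws => hmax w hzw (hp.concat hws hzw hfR)
  obtain ⟨j, rfl, hj⟩ := mem_support_iff_exists_getVert.1 hws
  have hjlt : j < p.length :=
    hj.lt_of_ne fun h => hzw.ne (by rw [h, getVert_length])
  have hpos : Odd (j + p.length) → 0 < j := by
    rintro hodd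
    refine Nat.pos_of_ne_zero fun hj0 => hx ⟨s(z, p.getVert j), ?_, by simp [hj0]⟩
    subst hj0
    have : ¬ Even p.length := by simpa [Nat.not_even_iff_odd] using hodd
    simpa [hR, this] using hfR
  obtain ⟨i, hi, hpar, hwi⟩ := p.exists_even_add_getVert_mem hj (fun _ => hjlt) hpos
  have hiR : s(p.getVert i, p.getVert (i + 1)) ∈ R := by
    have := hp.2 i hi
    rw [Nat.even_add] at hpar
    rwa [hR, ← if_congr hpar rfl rfl]
  have hfi := hRm.eq_of_mem_of_mem hfR hiR (Sym2.mem_mk_right z _) hwi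
  have hz : z ∈ s(p.getVert i, p.getVert (i + 1)) := hfi ▸ Sym2.mem_mk_left _ _
  rw [Nat.even_iff] at hpar
  rcases Sym2.mem_iff.1 hz with h | h
  · have := (hp.1.getVert_eq_end_iff hi.le).1 h.symm
    omega
  · have := (hp.1.getVert_eq_end_iff hi).1 h.symm
    omega

end SimpleGraph.Walk

/-- `(A, B)` is what remains of `(M, M*)` after deleting the edges of some maximal alternating
paths. The last condition makes an alternating path joining `A`-free vertices of `B` an
`M`-augmenting path. -/
structure IsResidualPair (G : SimpleGraph V) (M A B : Set (Sym2 V)) : Prop where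
  subset : A ⊆ M
  isMatchingSet : IsMatchingSet G B
  inter_subset : B ∩ M ⊆ A
  coveredVerts_inter_subset : coveredVerts B ∩ coveredVerts M ⊆ coveredVerts A

namespace IsResidualPair

open Walk

variable {M A B : Set (Sym2 V)}

theorem sdiff_edges (hM : IsMatchingSet G M) (h : IsResidualPair G M A B) {x z : V}
    {p : G.Walk x z} (hp : p.IsAltPath (B \ A) (A \ B))
    (hz : Even p.length → z ∉ coveredVerts (B \ A)) :
    IsResidualPair G M (A \ {e | e ∈ p.edges}) (B \ {e | e ∈ p.edges}) := by
  refine ⟨Set.sdiff_subset.trans h.subset, h.isMatchingSet.mono Set.sdiff_subset,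
    fun e ⟨⟨heB, heE⟩, heM⟩ => ⟨h.inter_subset ⟨heB, heM⟩, heE⟩, ?_⟩
  rintro v ⟨⟨g, ⟨hgB, hgE⟩, hvg⟩, hvM⟩
  obtain ⟨f, hfA, hvf⟩ := h.coveredVerts_inter_subset ⟨⟨g, hgB, hvg⟩, hvM⟩
  refine ⟨f, ⟨hfA, fun hfE => ?_⟩, hvf⟩
  obtain ⟨j, rfl, hj⟩ := mem_support_iff_exists_getVert.1 (mem_support_of_mem_edges hfE hvf)
  by_cases hend : Even p.length ∧ j = p.length
  · -- `v = z` is not covered by `B \ A`, so `g ∈ A` and `g = f` in the matching `A`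
    have hgA : g ∈ A := by_contra fun hgA =>
      hz hend.1 ⟨g, ⟨hgB, hgA⟩, by rwa [hend.2, getVert_length] at hvg⟩
    exact hgE (hM.mono h.subset |>.eq_of_mem_of_mem hgA hfA hvg hvf ▸ hfE)
  · obtain ⟨i, hi, hev, hvi⟩ := p.exists_even_add_getVert_mem (n := 0) hj
      (fun _ => by rw [Nat.even_iff] at *; omega) (fun hodd => by
        rw [Nat.odd_iff] at hodd; omega)
    have hiB : s(p.getVert i, p.getVert (i + 1)) ∈ B := by
      have := hp.2 i hi
      rw [if_pos (by simpa using hev)] at this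
      exact this.1
    exact hgE (h.isMatchingSet.eq_of_mem_of_mem hgB hiB hvg hvi ▸
      (p.mk_mem_edges_iff_exists).2 ⟨i, hi, rfl⟩)

theorem isAugPath_of_odd (h : IsResidualPair G M A B) {x z : V}
    {p : G.Walk x z} (hp : p.IsAltPath (B \ A) (A \ B)) (hodd : Odd p.length)
    (hxB : x ∈ coveredVerts B) (hxA : x ∉ coveredVerts A) (hz : z ∉ coveredVerts (A \ B)) :
    IsAugPath G M p := by
  have hlast : s(p.getVert (p.length - 1), z) ∈ B \ A := by
    have := hp.2 (p.length - 1) (Nat.sub_one_lt_of_lt hodd.pos)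
    rwa [Nat.sub_add_cancel hodd.pos, getVert_length,
      if_pos (by rw [Nat.even_iff]; rw [Nat.odd_iff] at hodd; omega)] at this
  have hzA : z ∉ coveredVerts A := by
    rintro ⟨f, hfA, hzf⟩
    have hfB : f ∉ B := fun hfB => hlast.2 <|
      h.isMatchingSet.eq_of_mem_of_mem hfB hlast.1 hzf (Sym2.mem_mk_right _ _) ▸ hfA
    exact hz ⟨f, ⟨hfA, hfB⟩, hzf⟩
  have hfree : ∀ y ∈ coveredVerts B, y ∉ coveredVerts A → y ∉ coveredVerts M :=
    fun y hyB hyA hyM => hyA (h.coveredVerts_inter_subset ⟨hyB, hyM⟩)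
  refine hp.isAugPath ?_ (Set.sdiff_subset.trans h.subset) hodd.pos (hfree x hxB hxA)
    (hfree z ⟨_, hlast.1, Sym2.mem_mk_right _ _⟩ hzA)
  exact Set.disjoint_left.2 fun e ⟨heB, heA⟩ heM => heA (h.inter_subset ⟨heB, heM⟩)

theorem exists_sdiff_of_ncard_lt [Fintype V] {k : ℕ} (hM : IsMatchingSet G M)
    (hlong : ∀ p : AugPath G M, 2 * k + 1 ≤ p.walk.length) (h : IsResidualPair G M A B)
    (hlt : A.ncard < B.ncard) :
    ∃ E : Set (Sym2 V), IsResidualPair G M (A \ E) (B \ E) ∧ (B ∩ E).Nonempty ∧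
      k * (B ∩ E).ncard ≤ (k + 1) * (A ∩ E).ncard := by
  have hA := hM.mono h.subset
  obtain ⟨x, hxB, hxA⟩ := hA.exists_mem_coveredVerts_notMem h.isMatchingSet hlt
  obtain ⟨z, p, hp, hmax⟩ := exists_maximal_isAltPath (G := G) (B \ A) (A \ B) x
  have hz := hp.notMem_coveredVerts_of_maximal (h.isMatchingSet.mono Set.sdiff_subset)
    (hA.mono Set.sdiff_subset) (fun hxQ => hxA (coveredVerts_mono Set.sdiff_subset hxQ)) hmax
  have hpos : 0 < p.length := by
    refine Nat.pos_of_ne_zero fun h0 => ?_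
    obtain rfl := p.eq_of_length_eq_zero h0
    obtain ⟨e, heB, hxe⟩ := hxB
    exact hz (by simpa [h0] using ⟨e, ⟨heB, fun heA => hxA ⟨e, heA, hxe⟩⟩, hxe⟩)
  obtain ⟨hBcard, hAcard⟩ := List.ncard_inter_of_getElem_mem_iff_even (S := B) (T := A)
    hp.1.edges_nodup
    (fun i hi => by
      have := hp.getElem_edges_mem hi
      split_ifs at this with hev <;> simp [hev, this.1, this.2])
    (fun i hi => by
      have := hp.getElem_edges_mem hi
      split_ifs at this with hev <;> simp [← Nat.not_even_iff_odd, hev, this.1, this.2])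
  rw [length_edges] at hBcard hAcard
  refine ⟨{e | e ∈ p.edges}, h.sdiff_edges hM hp (fun he => by simpa [he] using hz),
    Set.nonempty_of_ncard_ne_zero (by omega), ?_⟩
  rw [hBcard, hAcard]
  rcases Nat.even_or_odd p.length with heven | hodd
  · have : (p.length + 1) / 2 = p.length / 2 := by rw [Nat.even_iff] at heven; omega
    rw [this]
    exact Nat.mul_le_mul_right _ k.le_succ
  · have hlen : 2 * k + 1 ≤ p.length := hlong ⟨x, z, p,
      h.isAugPath_of_odd hp hodd hxB hxA (by simpa [Nat.not_even_iff_odd.2 hodd] using hz)⟩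
    have hk : k ≤ p.length / 2 := by omega
    have : (p.length + 1) / 2 = p.length / 2 + 1 := by rw [Nat.odd_iff] at hodd; omega
    rw [this]
    nlinarith

theorem mul_ncard_le [Fintype V] {k : ℕ} (hM : IsMatchingSet G M)
    (hlong : ∀ p : AugPath G M, 2 * k + 1 ≤ p.walk.length) (h : IsResidualPair G M A B) :
    k * B.ncard ≤ (k + 1) * A.ncard := by
  induction hn : B.ncard using Nat.strong_induction_on generalizing A B with
  | _ n ih =>
    subst hn
    rcases le_or_gt B.ncard A.ncard with hle | hlt
    · exact Nat.mul_le_mul k.le_succ hle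
    obtain ⟨E, hE, hne, hcard⟩ := h.exists_sdiff_of_ncard_lt hM hlong hlt
    have hB := Set.ncard_inter_add_ncard_sdiff_eq_ncard B E
    have hA := Set.ncard_inter_add_ncard_sdiff_eq_ncard A E
    have hpos := (Set.ncard_pos (Set.toFinite _)).2 hne
    have hrest := ih _ (by omega) hE rfl
    calc k * B.ncard = k * (B ∩ E).ncard + k * (B \ E).ncard := by rw [← hB, mul_add]
      _ ≤ (k + 1) * (A ∩ E).ncard + (k + 1) * (A \ E).ncard := add_le_add hcard hrest
      _ = (k + 1) * A.ncard := by rw [← hA, mul_add]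

end IsResidualPair

end

theorem matching_card_ge_of_no_short_aug_path_general
    {V : Type*} [Fintype V] (G : SimpleGraph V) (M Mstar : Set (Sym2 V))
    (hM : IsMatchingSet G M) (hMstar : IsMatchingSet G Mstar)
    (k : ℕ)
    (hlong : ∀ p : AugPath G M, 2 * k + 1 ≤ p.walk.length) :
    ((k : ℝ) / (k + 1)) * (Mstar.ncard : ℝ) ≤ (M.ncard : ℝ) := by
  have hres : IsResidualPair G M M Mstar :=
    ⟨subset_rfl, hMstar, Set.inter_subset_right, Set.inter_subset_right⟩
  have hkey : (k : ℝ) * Mstar.ncard ≤ (k + 1) * M.ncard := by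
    exact_mod_cast hres.mul_ncard_le hM hlong
  rw [div_mul_eq_mul_div, div_le_iff₀ (by positivity)]
  linarith

/-- Nguyen–Onak / Hopcroft–Karp. Let `M*` be a maximum cardinality
matching and `M` a matching in a finite simple graph `G`, and let `k ≥ 1`.  If every
`M`-augmenting path has length at least `2k + 1`, then `|M| ≥ (k/(k+1))·|M*|`. -/
theorem matching_card_ge_of_no_short_aug_path
    {V : Type*} [Fintype V] (G : SimpleGraph V) (M Mstar : Set (Sym2 V))
    (hM : IsMatchingSet G M) (hMstar : IsMatchingSet G Mstar)
    (hmax : ∀ M' : Set (Sym2 V), IsMatchingSet G M' → M'.ncard ≤ Mstar.ncard)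
    (k : ℕ) (hk : 1 ≤ k)
    (hlong : ∀ p : AugPath G M, 2 * k + 1 ≤ p.walk.length) :
    ((k : ℝ) / (k + 1)) * (Mstar.ncard : ℝ) ≤ (M.ncard : ℝ) :=
  matching_card_ge_of_no_short_aug_path_general G M Mstar hM hMstar k hlong
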